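/- arXiv:1802.02547 — 2 statements merged into one kernel-verified Lean document; each statement's English description precedes it below -/
import Mathlib

section
/- Let P₁,…,P_k ∈ {0,1}^{r×n} be a patch structure, α ∈ [0,1], and f_w(x) = (1/k)·Σ_{i=1}^k σ_α(wᵀPᵢx). Let μ be a probability measure on ℝⁿ symmetric about the origin with finite second moments, Σ = E_{x∼μ}[xxᵀ], and P_Σ = Σ_{i,j=1}^k PᵢΣPⱼᵀ. Then for all w, w* ∈ ℝ^r, E_{x∼μ}[(f_{w*}(x) − f_w(x))·((w* − w)ᵀ(Σ_{i=1}^k Pᵢ)x)] ≥ ((1+α)/(2k))·λ_min(P_Σ)·‖w* − w‖², where λ_min(P_Σ) is the minimum eigenvalue of the symmetric matrix P_Σ. -/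
open MeasureTheory Matrix Finset
open scoped RealInnerProductSpace

noncomputable section

/-- Leaky ReLU activation with parameter `α`. -/
def lrelu (α z : ℝ) : ℝ := if 0 ≤ z then z else α * z

/-- A patch structure: each `P i` is a 0/1 matrix with exactly one 1 in each row
and at most one 1 in each column. -/
def IsPatchStruct {r n k : ℕ} (P : Fin k → Matrix (Fin r) (Fin n) ℝ) : Prop :=
  (∀ i a b, P i a b = 0 ∨ P i a b = 1) ∧
  (∀ i a, ∃! b, P i a b = 1) ∧
  (∀ i b a a', P i a b = 1 → P i a' b = 1 → a = a')

/-- View a plain vector as an element of Euclidean space. -/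
def toEuc {m : ℕ} (v : Fin m → ℝ) : EuclideanSpace ℝ (Fin m) := WithLp.toLp 2 v

/-- The one-hidden-layer convolutional network
`f_w(x) = (1/k) ∑ i, σ_α (wᵀ Pᵢ x)` with average pooling. -/
def convnet {r n k : ℕ} (α : ℝ) (P : Fin k → Matrix (Fin r) (Fin n) ℝ)
    (w : EuclideanSpace ℝ (Fin r)) (x : EuclideanSpace ℝ (Fin n)) : ℝ :=
  (1 / (k : ℝ)) * ∑ i, lrelu α ((w : Fin r → ℝ) ⬝ᵥ (P i).mulVec x)

/-- The (uncentered) covariance matrix `Σ = E_{x∼μ}[x xᵀ]`. -/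
def covMat {n : ℕ} (μ : Measure (EuclideanSpace ℝ (Fin n))) : Matrix (Fin n) (Fin n) ℝ :=
  Matrix.of fun i j => ∫ x, x i * x j ∂μ

/-- Maximum eigenvalue of a Hermitian (real symmetric) matrix. -/
def lamMax {m : ℕ} (A : Matrix (Fin m) (Fin m) ℝ) (hA : A.IsHermitian) : ℝ :=
  ⨆ i, hA.eigenvalues i

/-- Minimum eigenvalue of a Hermitian (real symmetric) matrix. -/
def lamMin {m : ℕ} (A : Matrix (Fin m) (Fin m) ℝ) (hA : A.IsHermitian) : ℝ :=
  ⨅ i, hA.eigenvalues i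

/-!
Write `σ_α(z) = ((1+α)/2) z + ((1-α)/2) |z|`. With `v = w* - w` and `S(x) = vᵀ(∑ᵢ Pᵢ)x`, the
integrand becomes `((1+α)/(2k)) S(x)² + ((1-α)/(2k)) T(x) S(x)`, where
`T(x) = ∑ᵢ (|w*ᵀPᵢx| - |wᵀPᵢx|)` is even and `S` is odd. The second term therefore integrates to
zero against a symmetric measure, while `E[S²] = vᵀ P_Σ v ≥ λ_min(P_Σ) ‖v‖²`.
-/

lemma lrelu_eq_add_abs (α z : ℝ) : lrelu α z = (1 + α) / 2 * z + (1 - α) / 2 * |z| := by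
  unfold lrelu
  split_ifs with h
  · rw [abs_of_nonneg h]; ring
  · rw [abs_of_neg (not_le.1 h)]; ring

lemma convnet_sub_convnet {r n k : ℕ} (α : ℝ) (P : Fin k → Matrix (Fin r) (Fin n) ℝ)
    (w' w : EuclideanSpace ℝ (Fin r)) (x : EuclideanSpace ℝ (Fin n)) :
    convnet α P w' x - convnet α P w x
      = 1 / k * ((1 + α) / 2 * ((fun j => w' j - w j) ⬝ᵥ (∑ i, P i) *ᵥ x)
        + (1 - α) / 2 * ∑ i, (|(w' : Fin r → ℝ) ⬝ᵥ P i *ᵥ x| - |(w : Fin r → ℝ) ⬝ᵥ P i *ᵥ x|)) := by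
  have hsub : (fun j => w' j - w j) = (w' : Fin r → ℝ) - w := rfl
  rw [convnet, convnet, ← mul_sub, ← sum_sub_distrib]
  congr 1
  rw [hsub, sum_mulVec, dotProduct_sum, mul_sum, mul_sum, ← sum_add_distrib]
  refine sum_congr rfl fun i _ => ?_
  rw [lrelu_eq_add_abs, lrelu_eq_add_abs, sub_dotProduct]
  ring

lemma lamMin_mul_dotProduct_self_le {m : ℕ} (A : Matrix (Fin m) (Fin m) ℝ) (hA : A.IsHermitian)
    (v : Fin m → ℝ) : lamMin A hA * (v ⬝ᵥ v) ≤ v ⬝ᵥ A *ᵥ v := by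
  set c := lamMin A hA
  have hB : (A - algebraMap ℝ _ c).IsHermitian := by
    rw [algebraMap_eq_diagonal]; exact hA.sub (isHermitian_diagonal _)
  have hpsd : (A - algebraMap ℝ _ c).PosSemidef := by
    rw [hB.posSemidef_iff_eigenvalues_nonneg]
    intro i
    have hi := hB.eigenvalues_mem_spectrum_real i
    rw [← spectrum.sub_singleton_eq, hA.spectrum_real_eq_range_eigenvalues] at hi
    obtain ⟨_, ⟨j, rfl⟩, _, rfl, hj⟩ := hi
    exact hj ▸ sub_nonneg.2 (ciInf_le (Set.finite_range _).bddBelow j)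
  simpa only [star_trivial, sub_mulVec, dotProduct_sub, Algebra.algebraMap_eq_smul_one,
    smul_mulVec, one_mulVec, dotProduct_smul, smul_eq_mul, sub_nonneg]
    using hpsd.dotProduct_mulVec_nonneg v

lemma sum_sum_mul_mul_transpose {ι l m R : Type*} [Fintype ι] [Fintype m] [CommSemiring R]
    (A : ι → Matrix l m R) (C : Matrix m m R) :
    ∑ i, ∑ j, A i * C * (A j)ᵀ = (∑ i, A i) * C * (∑ i, A i)ᵀ := by
  simp only [transpose_sum, Matrix.mul_sum, Matrix.sum_mul]
  exact sum_comm

lemma EuclideanSpace.norm_sq_eq_dotProduct_self {ι : Type*} [Fintype ι]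
    (x : EuclideanSpace ℝ ι) : ‖x‖ ^ 2 = (x : ι → ℝ) ⬝ᵥ x := by
  rw [EuclideanSpace.real_norm_sq_eq]
  simp only [sq, dotProduct]

lemma integral_eq_zero_of_map_neg_eq {α : Type*} [MeasurableSpace α] [InvolutiveNeg α]
    [MeasurableNeg α] {μ : Measure α} (hμ : μ.map (fun x => -x) = μ) {f : α → ℝ}
    (hf : ∀ x, f (-x) = -f x) :
    ∫ x, f x ∂μ = 0 := by
  have h : ∫ x, f x ∂μ = ∫ x, f (-x) ∂μ := by
    conv_lhs => rw [← hμ]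
    exact integral_map_equiv (MeasurableEquiv.neg α) f
  simp only [hf, integral_neg] at h
  exact self_eq_neg.1 h

section SecondMoment

variable {n : ℕ} {μ : Measure (EuclideanSpace ℝ (Fin n))}

lemma memLp_dotProduct (hμ : MemLp id 2 μ) (c : Fin n → ℝ) :
    MemLp (fun x : EuclideanSpace ℝ (Fin n) => c ⬝ᵥ x) 2 μ := by
  have := (innerSL ℝ (WithLp.toLp 2 c)).comp_memLp' hμ
  convert this using 2 with x
  simp [EuclideanSpace.inner_eq_star_dotProduct, dotProduct_comm]

lemma memLp_dotProduct_mulVec {m : ℕ} (hμ : MemLp id 2 μ) (v : Fin m → ℝ)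
    (A : Matrix (Fin m) (Fin n) ℝ) :
    MemLp (fun x : EuclideanSpace ℝ (Fin n) => v ⬝ᵥ A *ᵥ x) 2 μ := by
  simpa only [dotProduct_mulVec] using memLp_dotProduct hμ (v ᵥ* A)

lemma integral_dotProduct_mul (c : Fin n → ℝ) {g : EuclideanSpace ℝ (Fin n) → ℝ}
    (hg : ∀ p, Integrable (fun x => x p * g x) μ) :
    ∫ x, (c ⬝ᵥ x) * g x ∂μ = c ⬝ᵥ fun p => ∫ x, x p * g x ∂μ := by
  simp only [dotProduct, Finset.sum_mul, mul_assoc]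
  rw [integral_finsetSum _ fun p _ => (hg p).const_mul (c p)]
  simp only [integral_const_mul]

lemma integral_dotProduct_mul_dotProduct (hμ : MemLp id 2 μ) (c d : Fin n → ℝ) :
    ∫ x, (c ⬝ᵥ x) * (d ⬝ᵥ x) ∂μ = c ⬝ᵥ covMat μ *ᵥ d := by
  have hcoord (p : Fin n) : MemLp (fun x : EuclideanSpace ℝ (Fin n) => x p) 2 μ := by
    simpa using memLp_dotProduct hμ (Pi.single p 1)
  rw [integral_dotProduct_mul c fun p => (hcoord p).integrable_mul (memLp_dotProduct hμ d)]
  congr 1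
  ext p
  have hcomm : ∫ x, x p * (d ⬝ᵥ x) ∂μ = ∫ x, (d ⬝ᵥ x) * x p ∂μ := by simp only [mul_comm]
  rw [hcomm, integral_dotProduct_mul d fun q => (hcoord q).integrable_mul (hcoord p),
    mulVec, dotProduct_comm]
  simp only [covMat, of_apply, mul_comm]

lemma integral_dotProduct_mulVec_mul_self {m : ℕ} (hμ : MemLp id 2 μ) (v : Fin m → ℝ)
    (A : Matrix (Fin m) (Fin n) ℝ) :
    ∫ x, (v ⬝ᵥ A *ᵥ x) * (v ⬝ᵥ A *ᵥ x) ∂μ = v ⬝ᵥ (A * covMat μ * Aᵀ) *ᵥ v := by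
  simp only [dotProduct_mulVec v A]
  rw [integral_dotProduct_mul_dotProduct hμ, ← mulVec_mulVec, ← mulVec_mulVec,
    dotProduct_mulVec v A, mulVec_transpose]

end SecondMoment

theorem stmt5_general {n r k : ℕ} (P : Fin k → Matrix (Fin r) (Fin n) ℝ)
    (α : ℝ) (hα : α ∈ Set.Icc (0 : ℝ) 1)
    (μ : Measure (EuclideanSpace ℝ (Fin n)))
    (hsymm : μ.map (fun x => -x) = μ)
    (hmom : Integrable (fun x => ‖x‖ ^ 2) μ)
    (hPSig : (∑ i, ∑ j, P i * covMat μ * (P j)ᵀ).IsHermitian)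
    (w wstar : EuclideanSpace ℝ (Fin r)) :
    ∫ x, (convnet α P wstar x - convnet α P w x)
        * ((fun j => wstar j - w j) ⬝ᵥ (∑ i, P i).mulVec x) ∂μ
      ≥ (1 + α) / (2 * k) * lamMin (∑ i, ∑ j, P i * covMat μ * (P j)ᵀ) hPSig
          * ‖wstar - w‖ ^ 2 := by
  have hμ : MemLp id 2 μ := (memLp_two_iff_integrable_sq_norm aestronglyMeasurable_id).2 hmom
  set v : Fin r → ℝ := fun j => wstar j - w j
  set S := fun x : EuclideanSpace ℝ (Fin n) => v ⬝ᵥ (∑ i, P i) *ᵥ x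
  set T := fun x : EuclideanSpace ℝ (Fin n) =>
    ∑ i, (|(wstar : Fin r → ℝ) ⬝ᵥ P i *ᵥ x| - |(w : Fin r → ℝ) ⬝ᵥ P i *ᵥ x|)
  have hS : MemLp S 2 μ := memLp_dotProduct_mulVec hμ v _
  have hT : MemLp T 2 μ := memLp_finsetSum _ fun i _ =>
    (memLp_dotProduct_mulVec hμ _ _).abs.sub (memLp_dotProduct_mulVec hμ _ _).abs
  have hodd : ∫ x, T x * S x ∂μ = 0 :=
    integral_eq_zero_of_map_neg_eq hsymm fun x => by
      simp only [S, T, WithLp.ofLp_neg, mulVec_neg, dotProduct_neg, abs_neg, mul_neg]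
  have hquad : ∫ x, S x * S x ∂μ = v ⬝ᵥ (∑ i, ∑ j, P i * covMat μ * (P j)ᵀ) *ᵥ v := by
    rw [sum_sum_mul_mul_transpose]
    exact integral_dotProduct_mulVec_mul_self hμ v _
  have hSS : Integrable (fun x => S x * S x) μ := hS.integrable_mul hS
  have hTS : Integrable (fun x => T x * S x) μ := hT.integrable_mul hS
  calc ∫ x, (convnet α P wstar x - convnet α P w x) * S x ∂μ
      = ∫ x, (1 + α) / (2 * k) * (S x * S x) + (1 - α) / (2 * k) * (T x * S x) ∂μ := by
        congr 1; ext x; rw [convnet_sub_convnet]; ring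
    _ = (1 + α) / (2 * k) * (v ⬝ᵥ (∑ i, ∑ j, P i * covMat μ * (P j)ᵀ) *ᵥ v) := by
        rw [integral_add (hSS.const_mul _) (hTS.const_mul _),
          integral_const_mul, integral_const_mul, hodd, hquad]
        ring
    _ ≥ (1 + α) / (2 * k) * lamMin _ hPSig * ‖wstar - w‖ ^ 2 := by
        rw [EuclideanSpace.norm_sq_eq_dotProduct_self, mul_assoc]
        have hc : 0 ≤ (1 + α) / (2 * k) := by have := hα.1; positivity
        exact mul_le_mul_of_nonneg_left (lamMin_mul_dotProduct_self_le _ hPSig v) hc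

/-- For a patch structure, `α ∈ [0,1]`, and a symmetric probability
measure `μ` with finite second moments, covariance `Σ` and `P_Σ = ∑_{i,j} Pᵢ Σ Pⱼᵀ`,
`E[(f_{w*}(x) − f_w(x))·((w*−w)ᵀ(∑ᵢPᵢ)x)] ≥ ((1+α)/(2k))·λ_min(P_Σ)·‖w*−w‖²`. -/
theorem stmt5 {n r k : ℕ} (hk : 0 < k) (P : Fin k → Matrix (Fin r) (Fin n) ℝ)
    (hP : IsPatchStruct P) (α : ℝ) (hα : α ∈ Set.Icc (0 : ℝ) 1)
    (μ : Measure (EuclideanSpace ℝ (Fin n))) [IsProbabilityMeasure μ]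
    (hsymm : μ.map (fun x => -x) = μ)
    (hmom : Integrable (fun x => ‖x‖ ^ 2) μ)
    (hPSig : (∑ i, ∑ j, P i * covMat μ * (P j)ᵀ).IsHermitian)
    (w wstar : EuclideanSpace ℝ (Fin r)) :
    ∫ x, (convnet α P wstar x - convnet α P w x)
        * ((fun j => wstar j - w j) ⬝ᵥ (∑ i, P i).mulVec x) ∂μ
      ≥ (1 + α) / (2 * k) * lamMin (∑ i, ∑ j, P i * covMat μ * (P j)ᵀ) hPSig
          * ‖wstar - w‖ ^ 2 :=
  stmt5_general P α hα μ hsymm hmom hPSig w wstar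
end
end

section
/- Let n₁, n₂, r₁, r₂, d₁, d₂ be positive integers with 1 ≤ d₁ ≤ r₁, 1 ≤ d₂ ≤ r₂, n₁ ≥ 2r₁ − 1, n₂ ≥ 2r₂ − 1, and k₁ = ⌊(n₁−r₁)/d₁⌋ + 1, k₂ = ⌊(n₂−r₂)/d₂⌋ + 1. Let Q = Σ_{i,p=1}^{k₁} Σ_{j,q=1}^{k₂} Q_{(i,j)}·Q_{(p,q)}ᵀ where Q_{(i,j)} are the 2D patch-and-stride selection matrices. Let p₁ = ⌊(r₁−1)/d₁⌋ and p₂ = ⌊(r₂−1)/d₂⌋. Then the minimum eigenvalue of Q satisfies λ_min(Q) ≥ 1/4, and the maximum eigenvalue satisfies λ_max(Q) ≤ k₁·(p₁+1)·k₂·(p₂+1). -/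
open Matrix Finset
open scoped Kronecker

noncomputable section

/-- The `i`-th selection matrix of the 1D patch-and-stride structure with image size `n`,
patch size `r` and stride `d` (0-based indices): `(Pᵢ)_{a,b} = 1` iff `b = i·d + a`. -/
def patch1D (n r d : ℕ) (i : Fin ((n - r) / d + 1)) : Matrix (Fin r) (Fin n) ℝ :=
  Matrix.of fun a b => if (b : ℕ) = i.1 * d + a.1 then 1 else 0

/-- The 1D patch matrix `P = ∑_{i,j} Pᵢ Pⱼᵀ`. -/
def patchMat1D (n r d : ℕ) : Matrix (Fin r) (Fin r) ℝ :=
  ∑ i, ∑ j, patch1D n r d i * (patch1D n r d j)ᵀ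

/-- The row-major index bijection `{0,…,m−1} × {0,…,n−1} → {0,…,mn−1}`. -/
def rowMajor (m n : ℕ) (x : Fin m × Fin n) : Fin (m * n) :=
  ⟨x.1.1 * n + x.2.1, by
    have h1 : x.1.1 * n + x.2.1 < x.1.1 * n + n := Nat.add_lt_add_left x.2.2 _
    have h2 : x.1.1 * n + n = (x.1.1 + 1) * n := (Nat.succ_mul _ _).symm
    have h3 : (x.1.1 + 1) * n ≤ m * n := Nat.mul_le_mul_right _ x.1.2
    exact lt_of_lt_of_le (h2 ▸ h1) h3⟩

/-- The `(i,j)`-th selection matrix of the 2D patch-and-stride structure with image size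
`n₁ × n₂`, patch size `r₁ × r₂` and strides `d₁, d₂`, acting on row-major vectorized
images (0-based indices): `(Q_{(i,j)})_{a,b} = 1` iff `a = p·r₂ + q` and
`b = (i·d₁ + p)·n₂ + j·d₂ + q` for some `0 ≤ p < r₁`, `0 ≤ q < r₂`. -/
def patch2D (n₁ n₂ r₁ r₂ d₁ d₂ : ℕ)
    (i : Fin ((n₁ - r₁) / d₁ + 1)) (j : Fin ((n₂ - r₂) / d₂ + 1)) :
    Matrix (Fin (r₁ * r₂)) (Fin (n₁ * n₂)) ℝ :=
  Matrix.of fun a b =>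
    if ∃ p : Fin r₁, ∃ q : Fin r₂, (a : ℕ) = p.1 * r₂ + q.1 ∧
        (b : ℕ) = (i.1 * d₁ + p.1) * n₂ + j.1 * d₂ + q.1 then 1 else 0

/-- The 2D patch matrix `Q = ∑_{i,p} ∑_{j,q} Q_{(i,j)} Q_{(p,q)}ᵀ`. -/
def patchMat2D (n₁ n₂ r₁ r₂ d₁ d₂ : ℕ) : Matrix (Fin (r₁ * r₂)) (Fin (r₁ * r₂)) ℝ :=
  ∑ i, ∑ p, ∑ j, ∑ q,
    patch2D n₁ n₂ r₁ r₂ d₁ d₂ i j * (patch2D n₁ n₂ r₁ r₂ d₁ d₂ p q)ᵀ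

/-! The matrix `Q` is, up to the row-major reindexing `Fin (r₁ * r₂) ≃ Fin r₁ × Fin r₂`, the
Kronecker product `P₁ ⊗ P₂` of the 1D patch matrices, so it suffices to prove
`1/2 ≤ P ≤ k (p + 1)` in the Loewner order. Write `P = S Sᵀ` with `S = ∑ i, Pᵢ`; then `Sᵀ y` is the
sum `g` of the `k` translates of `y` by multiples of `d`. Every point is covered by at most
`p + 1` translates, which gives the upper bound by Cauchy–Schwarz. For the lower bound,
`g - g(· - d) = y - y(· - k d)`, and the two terms on the right have disjoint supports because
`k d ≥ r` (this is where `n ≥ 2 r - 1` enters), so `2 ‖y‖² = ‖g - g(· - d)‖² ≤ 4 ‖g‖²`. -/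

open Function

-- ℓ² norms of finitely supported functions on `ℤ` are written as sums over windows `Ico 0 N`
-- containing the support.
namespace Int

lemma sum_Ico_comp_sub_of_support_subset {f : ℤ → ℝ} {N M c : ℤ}
    (hf : support f ⊆ Set.Ico 0 N) (hc : 0 ≤ c) (hM : c + N ≤ M) :
    ∑ z ∈ Ico 0 M, f (z - c) = ∑ z ∈ Ico 0 N, f z := by
  have hshift := Finset.sum_Ico_add' f 0 M (-c)
  simp only [← sub_eq_add_neg, zero_sub] at hshift
  rw [hshift]
  refine (Finset.sum_subset (fun z hz => ?_) fun z _ hz => ?_).symm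
  · simp only [Finset.mem_Ico] at hz ⊢; omega
  · by_contra h
    have := hf h
    simp only [Set.mem_Ico, Finset.mem_Ico] at this hz
    exact hz this

lemma sum_Ico_zero_natCast {M : Type*} [AddCommMonoid M] (F : ℤ → M) (n : ℕ) :
    ∑ z ∈ Ico (0 : ℤ) n, F z = ∑ a : Fin n, F a := by
  rw [Int.Ico_eq_finset_map, Finset.sum_map, sub_zero, Int.toNat_natCast,
    ← Fin.sum_univ_eq_sum_range]
  simp only [Function.Embedding.trans_apply, Nat.castEmbedding_apply, addLeftEmbedding_apply,
    zero_add]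

lemma sum_sq_sub_comp_sub_eq_two_mul {f : ℤ → ℝ} {N c : ℤ} (hf : support f ⊆ Set.Ico 0 N)
    (hN : 0 ≤ N) (hNc : N ≤ c) :
    ∑ z ∈ Ico 0 (c + N), (f z - f (z - c)) ^ 2 = 2 * ∑ z ∈ Ico 0 N, f z ^ 2 := by
  have hsq : support (fun z => f z ^ 2) ⊆ Set.Ico 0 N := fun z hz => hf (by simpa using hz)
  have hcross (z : ℤ) : f z * f (z - c) = 0 := by
    by_contra h
    have h₁ := hf (left_ne_zero_of_mul h)
    have h₂ := hf (right_ne_zero_of_mul h)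
    simp only [Set.mem_Ico] at h₁ h₂
    omega
  have hpt (z : ℤ) : (f z - f (z - c)) ^ 2 = f z ^ 2 + f (z - c) ^ 2 := by
    rw [sub_sq, mul_assoc, hcross]; ring
  have h₀ := sum_Ico_comp_sub_of_support_subset (M := c + N) hsq le_rfl (by omega)
  simp only [sub_zero] at h₀
  rw [Finset.sum_congr rfl fun z _ => hpt z, Finset.sum_add_distrib, h₀,
    sum_Ico_comp_sub_of_support_subset hsq (by omega) le_rfl]
  ring

lemma sum_sq_sub_comp_sub_le_four_mul {g : ℤ → ℝ} {N c : ℤ} (hg : support g ⊆ Set.Ico 0 N)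
    (hc : 0 ≤ c) :
    ∑ z ∈ Ico 0 (N + c), (g z - g (z - c)) ^ 2 ≤ 4 * ∑ z ∈ Ico 0 N, g z ^ 2 := by
  have hsq : support (fun z => g z ^ 2) ⊆ Set.Ico 0 N := fun z hz => hg (by simpa using hz)
  have h₀ := sum_Ico_comp_sub_of_support_subset (M := N + c) hsq le_rfl (by omega)
  have h₁ := sum_Ico_comp_sub_of_support_subset (M := N + c) hsq hc (by omega)
  simp only [sub_zero] at h₀
  calc ∑ z ∈ Ico 0 (N + c), (g z - g (z - c)) ^ 2
      ≤ ∑ z ∈ Ico 0 (N + c), (2 * g z ^ 2 + 2 * g (z - c) ^ 2) :=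
        Finset.sum_le_sum fun z _ => by nlinarith [sq_nonneg (g z + g (z - c))]
    _ = 4 * ∑ z ∈ Ico 0 N, g z ^ 2 := by
        rw [Finset.sum_add_distrib, ← Finset.mul_sum, ← Finset.mul_sum, h₀, h₁]; ring

end Int

def strideSum (d K : ℕ) (f : ℤ → ℝ) (z : ℤ) : ℝ :=
  ∑ i ∈ range (K + 1), f (z - i * d)

section strideSum

variable {d K r : ℕ} {f : ℤ → ℝ}

lemma strideSum_sub_strideSum (z : ℤ) :
    strideSum d K f z - strideSum d K f (z - d) = f z - f (z - (K + 1 : ℕ) * d) := by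
  have := Finset.sum_range_sub' (fun i : ℕ => f (z - i * d)) (K + 1)
  simp only [Nat.cast_zero, zero_mul, sub_zero] at this
  rw [← this, strideSum, strideSum, ← Finset.sum_sub_distrib]
  refine Finset.sum_congr rfl fun i _ => ?_
  push_cast
  ring_nf

lemma support_strideSum_subset (hf : support f ⊆ Set.Ico 0 r) :
    support (strideSum d K f) ⊆ Set.Ico 0 (K * d + r) := by
  intro z hz
  obtain ⟨i, hi, hfi⟩ := Finset.exists_ne_zero_of_sum_ne_zero hz
  have hmem := hf hfi
  have hiK : (i : ℤ) * d ≤ K * d := by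
    have : i ≤ K := Nat.lt_succ_iff.mp (Finset.mem_range.mp hi)
    exact_mod_cast Nat.mul_le_mul_right d this
  simp only [Set.mem_Ico] at hmem ⊢
  constructor <;> nlinarith [hmem.1, hmem.2, (by positivity : (0 : ℤ) ≤ i * d)]

lemma sum_sq_le_two_mul_sum_sq_strideSum (hf : support f ⊆ Set.Ico 0 r) (hrd : r ≤ (K + 1) * d) :
    ∑ z ∈ Ico (0 : ℤ) r, f z ^ 2 ≤ 2 * ∑ z ∈ Ico (0 : ℤ) (K * d + r), strideSum d K f z ^ 2 := by
  have key := Int.sum_sq_sub_comp_sub_le_four_mul (support_strideSum_subset (d := d) (K := K) hf)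
    (Int.natCast_nonneg d)
  have hwin : (K * d + r : ℤ) + d = (K + 1 : ℕ) * d + r := by push_cast; ring
  rw [hwin] at key
  simp only [strideSum_sub_strideSum] at key
  rw [Int.sum_sq_sub_comp_sub_eq_two_mul hf (Int.natCast_nonneg r) (by exact_mod_cast hrd)] at key
  linarith

lemma card_le_of_forall_mul_lt_mul_add {s : Finset ℕ} (hd : 0 < d)
    (h : ∀ i ∈ s, ∀ j ∈ s, i * d < j * d + r) : #s ≤ (r - 1) / d + 1 := by
  rcases s.eq_empty_or_nonempty with rfl | hs
  · simp
  set m := s.min' hs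
  have hsub : s ⊆ Icc m (m + (r - 1) / d) := fun j hj => by
    have hmj : m ≤ j := s.min'_le j hj
    have hlt := h j hj m (s.min'_mem hs)
    have : (j - m) * d ≤ r - 1 := by rw [Nat.sub_mul]; omega
    have := (Nat.le_div_iff_mul_le hd).mpr this
    simp only [Finset.mem_Icc]; omega
  calc #s ≤ #(Icc m (m + (r - 1) / d)) := Finset.card_le_card hsub
    _ = (r - 1) / d + 1 := by rw [Nat.card_Icc, add_assoc, Nat.add_sub_cancel_left]

lemma sq_strideSum_le (hd : 0 < d) (hf : support f ⊆ Set.Ico 0 r) (z : ℤ) :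
    strideSum d K f z ^ 2 ≤ (((r - 1) / d : ℕ) + 1) * ∑ i ∈ range (K + 1), f (z - i * d) ^ 2 := by
  classical
  set T := (range (K + 1)).filter fun i : ℕ => f (z - i * d) ≠ 0
  have hT : #T ≤ (r - 1) / d + 1 := by
    refine card_le_of_forall_mul_lt_mul_add hd fun i hi j hj => ?_
    have hi := hf (Finset.mem_filter.mp hi).2
    have hj := hf (Finset.mem_filter.mp hj).2
    simp only [Set.mem_Ico] at hi hj
    exact_mod_cast (by omega : (i : ℤ) * d < j * d + r)
  calc strideSum d K f z ^ 2 = (∑ i ∈ T, f (z - i * d)) ^ 2 := by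
        rw [strideSum, Finset.sum_filter_ne_zero]
    _ ≤ #T * ∑ i ∈ T, f (z - i * d) ^ 2 := sq_sum_le_card_mul_sum_sq
    _ ≤ (((r - 1) / d : ℕ) + 1) * ∑ i ∈ range (K + 1), f (z - i * d) ^ 2 := by
        gcongr ?_ * ?_
        · exact_mod_cast hT
        · exact Finset.sum_le_sum_of_subset_of_nonneg (Finset.filter_subset _ _)
            fun _ _ _ => sq_nonneg _

lemma sum_sq_strideSum_le (hd : 0 < d) (hf : support f ⊆ Set.Ico 0 r) :
    ∑ z ∈ Ico (0 : ℤ) (K * d + r), strideSum d K f z ^ 2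
      ≤ (K + 1 : ℕ) * (((r - 1) / d : ℕ) + 1) * ∑ z ∈ Ico (0 : ℤ) r, f z ^ 2 := by
  have hsq : support (fun z => f z ^ 2) ⊆ Set.Ico 0 r := fun z hz =>
    hf (by simpa using hz)
  have hshift : ∀ i ∈ range (K + 1),
      ∑ z ∈ Ico (0 : ℤ) (K * d + r), f (z - i * d) ^ 2 = ∑ z ∈ Ico (0 : ℤ) r, f z ^ 2 :=
    fun i hi => Int.sum_Ico_comp_sub_of_support_subset hsq (by positivity) <| by
      have : i * d ≤ K * d := Nat.mul_le_mul_right d (Nat.lt_succ_iff.mp (Finset.mem_range.mp hi))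
      exact_mod_cast (by omega : i * d + r ≤ K * d + r)
  calc ∑ z ∈ Ico (0 : ℤ) (K * d + r), strideSum d K f z ^ 2
      ≤ ∑ z ∈ Ico (0 : ℤ) (K * d + r),
          (((r - 1) / d : ℕ) + 1) * ∑ i ∈ range (K + 1), f (z - i * d) ^ 2 :=
        Finset.sum_le_sum fun z _ => sq_strideSum_le hd hf z
    _ = (((r - 1) / d : ℕ) + 1) * ∑ i ∈ range (K + 1), ∑ z ∈ Ico (0 : ℤ) (K * d + r),
          f (z - i * d) ^ 2 := by rw [← Finset.mul_sum, Finset.sum_comm]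
    _ = _ := by
        rw [Finset.sum_congr rfl hshift, Finset.sum_const, Finset.card_range, nsmul_eq_mul]
        ring

end strideSum

def extendByZero {r : ℕ} (y : Fin r → ℝ) : ℤ → ℝ :=
  Function.extend (fun a : Fin r => (a : ℤ)) y 0

section extendByZero

variable {r : ℕ} (y : Fin r → ℝ)

lemma extendByZero_natCast (a : Fin r) : extendByZero y a = y a :=
  (Nat.cast_injective.comp Fin.val_injective).extend_apply y 0 a

lemma support_extendByZero_subset : support (extendByZero y) ⊆ Set.Ico 0 r := by
  intro z hz
  by_contra h
  refine hz (Function.extend_apply' _ _ _ ?_)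
  rintro ⟨a, rfl⟩
  exact h ⟨Int.natCast_nonneg a, by exact_mod_cast a.2⟩

lemma sum_Ico_sq_extendByZero : ∑ z ∈ Ico (0 : ℤ) r, extendByZero y z ^ 2 = y ⬝ᵥ y := by
  simp only [Int.sum_Ico_zero_natCast, extendByZero_natCast, dotProduct, sq]

end extendByZero

open scoped MatrixOrder ComplexOrder

namespace Matrix

section LoewnerOrder

variable {𝕜 : Type*} [RCLike 𝕜] {m n : Type*}

lemma kronecker_le_kronecker_left [Finite m] [Finite n] {A A' : Matrix m m 𝕜}
    {B : Matrix n n 𝕜} (h : A ≤ A') (hB : 0 ≤ B) : A ⊗ₖ B ≤ A' ⊗ₖ B := by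
  have hsub : A' ⊗ₖ B - A ⊗ₖ B = (A' - A) ⊗ₖ B := by ext; simp [sub_mul]
  rw [le_iff, hsub]
  exact (le_iff.mp h).kronecker hB.posSemidef

lemma kronecker_le_kronecker_right [Finite m] [Finite n] {A : Matrix m m 𝕜}
    {B B' : Matrix n n 𝕜} (hA : 0 ≤ A) (h : B ≤ B') : A ⊗ₖ B ≤ A ⊗ₖ B' := by
  have hsub : A ⊗ₖ B' - A ⊗ₖ B = A ⊗ₖ (B' - B) := by ext; simp [mul_sub]
  rw [le_iff, hsub]
  exact hA.posSemidef.kronecker (le_iff.mp h)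

lemma smul_one_nonneg [DecidableEq n] {a : ℝ} (ha : 0 ≤ a) : (0 : Matrix n n 𝕜) ≤ a • 1 :=
  (PosSemidef.one.smul ha).nonneg

lemma smul_one_kronecker_smul_one [DecidableEq m] [DecidableEq n] (a b : ℝ) :
    (a • 1 : Matrix m m 𝕜) ⊗ₖ (b • 1 : Matrix n n 𝕜) = (a * b) • 1 := by
  rw [smul_kronecker, kronecker_smul, one_kronecker_one, smul_smul]

lemma smul_one_le_kronecker [Finite m] [Finite n] [DecidableEq m] [DecidableEq n]
    {A : Matrix m m 𝕜} {B : Matrix n n 𝕜} {a b : ℝ} (ha : 0 ≤ a) (hb : 0 ≤ b) (hA : a • 1 ≤ A)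
    (hB : b • 1 ≤ B) : (a * b) • 1 ≤ A ⊗ₖ B :=
  calc (a * b) • (1 : Matrix (m × n) (m × n) 𝕜) = (a • 1 : Matrix m m 𝕜) ⊗ₖ (b • 1) :=
        (smul_one_kronecker_smul_one a b).symm
    _ ≤ A ⊗ₖ (b • 1) := kronecker_le_kronecker_left hA (smul_one_nonneg hb)
    _ ≤ A ⊗ₖ B := kronecker_le_kronecker_right ((smul_one_nonneg ha).trans hA) hB

lemma kronecker_le_smul_one [Finite m] [Finite n] [DecidableEq m] [DecidableEq n]
    {A : Matrix m m 𝕜} {B : Matrix n n 𝕜} {a b : ℝ} (hA₀ : 0 ≤ A) (hB₀ : 0 ≤ B) (hA : A ≤ a • 1)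
    (hB : B ≤ b • 1) : A ⊗ₖ B ≤ (a * b) • 1 :=
  calc A ⊗ₖ B ≤ A ⊗ₖ (b • 1) := kronecker_le_kronecker_right hA₀ hB
    _ ≤ (a • 1 : Matrix m m 𝕜) ⊗ₖ (b • 1) := kronecker_le_kronecker_left hA (hB₀.trans hB)
    _ = (a * b) • 1 := smul_one_kronecker_smul_one a b

lemma submatrix_le_submatrix {A B : Matrix n n 𝕜} (h : A ≤ B) (e : m → n) :
    A.submatrix e e ≤ B.submatrix e e :=
  (le_iff.mp h).submatrix e

lemma smul_one_submatrix_equiv [DecidableEq m] [DecidableEq n] (a : ℝ) (e : m ≃ n) :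
    (a • 1 : Matrix n n 𝕜).submatrix e e = a • 1 := by
  change a • (1 : Matrix n n 𝕜).submatrix e e = a • 1
  rw [submatrix_one_equiv]

end LoewnerOrder

section RealQuadraticForm

variable {n : Type*} [Fintype n] [DecidableEq n] {A : Matrix n n ℝ} {c : ℝ}

lemma smul_one_le_of_forall_dotProduct (hA : A.IsHermitian)
    (h : ∀ x, c * (x ⬝ᵥ x) ≤ x ⬝ᵥ (A *ᵥ x)) : c • 1 ≤ A := by
  refine le_iff.mpr (.of_dotProduct_mulVec_nonneg (hA.sub (isHermitian_one.smul (.all c))) ?_)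
  intro x
  rw [star_trivial, sub_mulVec, dotProduct_sub, smul_mulVec, one_mulVec, dotProduct_smul,
    smul_eq_mul]
  linarith [h x]

lemma le_smul_one_of_forall_dotProduct (hA : A.IsHermitian)
    (h : ∀ x, x ⬝ᵥ (A *ᵥ x) ≤ c * (x ⬝ᵥ x)) : A ≤ c • 1 := by
  refine le_iff.mpr (.of_dotProduct_mulVec_nonneg ((isHermitian_one.smul (.all c)).sub hA) ?_)
  intro x
  rw [star_trivial, sub_mulVec, dotProduct_sub, smul_mulVec, one_mulVec, dotProduct_smul,
    smul_eq_mul]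
  linarith [h x]

end RealQuadraticForm

end Matrix

lemma le_lamMin {m : ℕ} {A : Matrix (Fin m) (Fin m) ℝ} (hA : A.IsHermitian) {c : ℝ} (hm : 0 < m)
    (h : c • 1 ≤ A) : c ≤ lamMin A hA := by
  have : Nonempty (Fin m) := ⟨⟨0, hm⟩⟩
  rw [← Algebra.algebraMap_eq_smul_one] at h
  exact le_ciInf fun i =>
    (algebraMap_le_iff_le_spectrum (ha := hA)).mp h _ (hA.eigenvalues_mem_spectrum_real i)

lemma lamMax_le {m : ℕ} {A : Matrix (Fin m) (Fin m) ℝ} (hA : A.IsHermitian) {c : ℝ} (hm : 0 < m)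
    (h : A ≤ c • 1) : lamMax A hA ≤ c := by
  have : Nonempty (Fin m) := ⟨⟨0, hm⟩⟩
  rw [← Algebra.algebraMap_eq_smul_one] at h
  exact ciSup_le fun i =>
    (le_algebraMap_iff_spectrum_le (ha := hA)).mp h _ (hA.eigenvalues_mem_spectrum_real i)

section patch1D

variable {n r d : ℕ}

lemma transpose_patch1D_mulVec (i : Fin ((n - r) / d + 1)) (y : Fin r → ℝ) (b : Fin n) :
    ((patch1D n r d i)ᵀ *ᵥ y) b = extendByZero y (b - i * d) := by
  simp only [mulVec, dotProduct, transpose_apply, patch1D, of_apply, ite_mul, one_mul, zero_mul]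
  by_cases h : ∃ a : Fin r, (b : ℕ) = i * d + a
  · obtain ⟨a, ha⟩ := h
    have hba : (b : ℤ) - i * d = a := by rw [ha]; push_cast; ring
    rw [hba, extendByZero_natCast, Finset.sum_eq_single a]
    · rw [if_pos ha]
    · intro a' _ ha'
      exact if_neg fun h' => ha' (Fin.ext (by omega))
    · exact fun h' => absurd (Finset.mem_univ a) h'
  · rw [Finset.sum_eq_zero fun a _ => if_neg fun ha => h ⟨a, ha⟩]
    refine (Function.extend_apply' (f := fun a : Fin r => (a : ℤ)) y 0 _ ?_).symm
    rintro ⟨a, ha⟩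
    exact h ⟨a, by omega⟩

lemma patchMat1D_eq_mul_transpose :
    patchMat1D n r d = (∑ i, patch1D n r d i) * (∑ i, patch1D n r d i)ᵀ := by
  simp only [patchMat1D, transpose_sum, Matrix.sum_mul, Matrix.mul_sum]
  exact Finset.sum_comm

lemma posSemidef_patchMat1D : (patchMat1D n r d).PosSemidef := by
  rw [patchMat1D_eq_mul_transpose, ← conjTranspose_eq_transpose_of_trivial]
  exact posSemidef_self_mul_conjTranspose _

lemma dotProduct_patchMat1D_mulVec (hrn : r ≤ n) (y : Fin r → ℝ) :
    y ⬝ᵥ (patchMat1D n r d *ᵥ y) = ∑ z ∈ Ico (0 : ℤ) (((n - r) / d : ℕ) * d + r),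
      strideSum d ((n - r) / d) (extendByZero y) z ^ 2 := by
  set g := strideSum d ((n - r) / d) (extendByZero y)
  have hS : (∑ i, patch1D n r d i)ᵀ *ᵥ y = fun b : Fin n => g b := by
    ext b
    simp only [transpose_sum, sum_mulVec, Finset.sum_apply, transpose_patch1D_mulVec, g, strideSum]
    exact Fin.sum_univ_eq_sum_range (fun i => extendByZero y (b - i * d)) _
  have hsupp : support (fun z => g z ^ 2) ⊆ Set.Ico 0 (((n - r) / d : ℕ) * d + r) :=
    fun z hz => support_strideSum_subset (support_extendByZero_subset y) (by simpa using hz)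
  have hwin : (((n - r) / d : ℕ) * d + r : ℤ) ≤ n := by
    have := Nat.div_mul_le_self (n - r) d
    omega
  calc y ⬝ᵥ (patchMat1D n r d *ᵥ y) = ∑ z ∈ Ico (0 : ℤ) n, g z ^ 2 := by
        rw [patchMat1D_eq_mul_transpose, ← mulVec_mulVec, dotProduct_mulVec, ← mulVec_transpose,
          hS, Int.sum_Ico_zero_natCast]
        simp only [dotProduct, sq]
    _ = _ := by simpa using Int.sum_Ico_comp_sub_of_support_subset hsupp le_rfl (by simpa using hwin)

lemma half_smul_one_le_patchMat1D (hd : 0 < d) (hrn : r ≤ n) (hn : 2 * r - 1 ≤ n) :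
    (1 / 2 : ℝ) • 1 ≤ patchMat1D n r d := by
  refine smul_one_le_of_forall_dotProduct posSemidef_patchMat1D.1 fun y => ?_
  have hrd : r ≤ ((n - r) / d + 1) * d := by
    have := Nat.lt_div_mul_add (a := n - r) hd
    rw [add_mul, one_mul]
    omega
  rw [dotProduct_patchMat1D_mulVec hrn, ← sum_Ico_sq_extendByZero]
  linarith [sum_sq_le_two_mul_sum_sq_strideSum (support_extendByZero_subset y) hrd]

lemma patchMat1D_le_smul_one (hd : 0 < d) (hrn : r ≤ n) :
    patchMat1D n r d ≤ ((((n - r) / d + 1 : ℕ) : ℝ) * (((r - 1) / d : ℕ) + 1)) • 1 := by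
  refine le_smul_one_of_forall_dotProduct posSemidef_patchMat1D.1 fun y => ?_
  rw [dotProduct_patchMat1D_mulVec hrn, ← sum_Ico_sq_extendByZero]
  exact sum_sq_strideSum_le hd (support_extendByZero_subset y)

end patch1D

section patch2D

variable {n₁ n₂ r₁ r₂ d₁ d₂ : ℕ}

lemma patch2D_eq_submatrix_kronecker (hrn₂ : r₂ ≤ n₂) (i : Fin ((n₁ - r₁) / d₁ + 1))
    (j : Fin ((n₂ - r₂) / d₂ + 1)) :
    patch2D n₁ n₂ r₁ r₂ d₁ d₂ i j = (patch1D n₁ r₁ d₁ i ⊗ₖ patch1D n₂ r₂ d₂ j).submatrix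
      finProdFinEquiv.symm finProdFinEquiv.symm := by
  ext a b
  have hr₂ : 0 < r₂ := Nat.pos_of_mul_pos_left (Nat.zero_lt_of_lt a.2)
  have hn₂ : 0 < n₂ := hr₂.trans_le hrn₂
  have hj : j * d₂ + r₂ ≤ n₂ := by
    have := Nat.mul_le_mul_right d₂ (Nat.lt_succ_iff.mp j.2)
    have := Nat.div_mul_le_self (n₂ - r₂) d₂
    omega
  simp only [patch2D, patch1D, submatrix_apply, kronecker_apply, of_apply,
    finProdFinEquiv_symm_apply, ite_zero_mul_ite_zero, mul_one]
  refine if_congr ?_ rfl rfl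
  rw [Fin.coe_divNat, Fin.coe_divNat, Fin.coe_modNat, Fin.coe_modNat]
  constructor
  · rintro ⟨p, q, ha, hb⟩
    obtain ⟨hap, haq⟩ :=
      (Nat.div_mod_unique (a := a) (d := p) (c := q) hr₂).mpr ⟨by rw [ha]; ring, q.2⟩
    refine (Nat.div_mod_unique hn₂).mpr ⟨by rw [hb, hap, haq]; ring, ?_⟩
    have := q.2
    omega
  · rintro ⟨hb₁, hb₂⟩
    refine ⟨⟨a / r₂, Nat.div_lt_of_lt_mul (mul_comm r₁ r₂ ▸ a.2)⟩, ⟨a % r₂, Nat.mod_lt _ hr₂⟩,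
      (Nat.div_add_mod' a r₂).symm, ?_⟩
    rw [← Nat.div_add_mod' b n₂, hb₁, hb₂]
    ring

lemma patchMat2D_eq_submatrix_kronecker (hrn₂ : r₂ ≤ n₂) :
    patchMat2D n₁ n₂ r₁ r₂ d₁ d₂ = (patchMat1D n₁ r₁ d₁ ⊗ₖ patchMat1D n₂ r₂ d₂).submatrix
      finProdFinEquiv.symm finProdFinEquiv.symm := by
  have hterm (i p : Fin ((n₁ - r₁) / d₁ + 1)) (j q : Fin ((n₂ - r₂) / d₂ + 1)) :
      patch2D n₁ n₂ r₁ r₂ d₁ d₂ i j * (patch2D n₁ n₂ r₁ r₂ d₁ d₂ p q)ᵀ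
        = ((patch1D n₁ r₁ d₁ i * (patch1D n₁ r₁ d₁ p)ᵀ) ⊗ₖ
            (patch1D n₂ r₂ d₂ j * (patch1D n₂ r₂ d₂ q)ᵀ)).submatrix
          finProdFinEquiv.symm finProdFinEquiv.symm := by
    rw [patch2D_eq_submatrix_kronecker hrn₂, patch2D_eq_submatrix_kronecker hrn₂,
      transpose_submatrix, submatrix_mul_equiv, ← kroneckerMap_transpose, mul_kronecker_mul]
  simp only [patchMat2D, hterm, patchMat1D]
  ext a b
  simp only [Matrix.sum_apply, submatrix_apply, kroneckerMap_apply, Finset.sum_mul]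
  simp only [Finset.mul_sum]

lemma quarter_smul_one_le_patchMat2D (hd₁ : 0 < d₁) (hrn₁ : r₁ ≤ n₁) (hn₁ : 2 * r₁ - 1 ≤ n₁)
    (hd₂ : 0 < d₂) (hrn₂ : r₂ ≤ n₂) (hn₂ : 2 * r₂ - 1 ≤ n₂) :
    (1 / 4 : ℝ) • 1 ≤ patchMat2D n₁ n₂ r₁ r₂ d₁ d₂ := by
  rw [patchMat2D_eq_submatrix_kronecker hrn₂, ← smul_one_submatrix_equiv _ finProdFinEquiv.symm,
    show (1 / 4 : ℝ) = 1 / 2 * (1 / 2) by norm_num]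
  exact submatrix_le_submatrix (smul_one_le_kronecker (by norm_num) (by norm_num)
    (half_smul_one_le_patchMat1D hd₁ hrn₁ hn₁) (half_smul_one_le_patchMat1D hd₂ hrn₂ hn₂)) _

lemma patchMat2D_le_smul_one (hd₁ : 0 < d₁) (hrn₁ : r₁ ≤ n₁) (hd₂ : 0 < d₂) (hrn₂ : r₂ ≤ n₂) :
    patchMat2D n₁ n₂ r₁ r₂ d₁ d₂
      ≤ ((((n₁ - r₁) / d₁ + 1 : ℕ) : ℝ) * (((r₁ - 1) / d₁ : ℕ) + 1)
          * ((((n₂ - r₂) / d₂ + 1 : ℕ) : ℝ) * (((r₂ - 1) / d₂ : ℕ) + 1))) • 1 := by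
  rw [patchMat2D_eq_submatrix_kronecker hrn₂, ← smul_one_submatrix_equiv _ finProdFinEquiv.symm]
  exact submatrix_le_submatrix (kronecker_le_smul_one posSemidef_patchMat1D.nonneg
    posSemidef_patchMat1D.nonneg (patchMat1D_le_smul_one hd₁ hrn₁)
    (patchMat1D_le_smul_one hd₂ hrn₂)) _

end patch2D

/-- For the 2D patch-and-stride structure, with `p₁ = ⌊(r₁−1)/d₁⌋`
and `p₂ = ⌊(r₂−1)/d₂⌋`, the 2D patch matrix `Q` satisfies `λ_min(Q) ≥ 1/4` and
`λ_max(Q) ≤ k₁·(p₁+1)·k₂·(p₂+1)`. -/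
theorem stmt17 (n₁ n₂ r₁ r₂ d₁ d₂ : ℕ)
    (hd₁ : 1 ≤ d₁) (hd₁r : d₁ ≤ r₁) (hr₁n : r₁ ≤ n₁) (hn₁ : 2 * r₁ - 1 ≤ n₁)
    (hd₂ : 1 ≤ d₂) (hd₂r : d₂ ≤ r₂) (hr₂n : r₂ ≤ n₂) (hn₂ : 2 * r₂ - 1 ≤ n₂)
    (hQ : (patchMat2D n₁ n₂ r₁ r₂ d₁ d₂).IsHermitian) :
    1 / 4 ≤ lamMin (patchMat2D n₁ n₂ r₁ r₂ d₁ d₂) hQ ∧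
    lamMax (patchMat2D n₁ n₂ r₁ r₂ d₁ d₂) hQ
      ≤ (((n₁ - r₁) / d₁ + 1 : ℕ) : ℝ) * (((r₁ - 1) / d₁ : ℕ) + 1)
          * ((((n₂ - r₂) / d₂ + 1 : ℕ) : ℝ) * (((r₂ - 1) / d₂ : ℕ) + 1)) := by
  have hm : 0 < r₁ * r₂ := Nat.mul_pos (by omega) (by omega)
  exact ⟨le_lamMin hQ hm (quarter_smul_one_le_patchMat2D hd₁ hr₁n hn₁ hd₂ hr₂n hn₂),
    lamMax_le hQ hm (patchMat2D_le_smul_one hd₁ hr₁n hd₂ hr₂n)⟩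
end
end
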